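/- arXiv:1110.1849 — 4 statements merged into one kernel-verified Lean document; each statement's English description precedes it below -/
import Mathlib

section
/- Let Q be a finite connected quandle whose underlying set is {1,2,…,n} and whose elements are naturally ordered (so that the quandle matrix of Q is in canonical form). Then every automorphism of Q is a natural reordering (namely, an automorphism ν is a natural reordering with respect to r_{ν^{-1}(n)}). -/
/-- A quandle structure on a set `Q`: a binary operation `op` that is idempotent,
right-invertible (each right translation `r_b : x ↦ x * b` is a bijection) and
right-distributive. -/
structure QuandleOp (Q : Type*) where
  op : Q → Q → Q
  op_self : ∀ a, op a a = a
  op_bijective : ∀ b, Function.Bijective fun a => op a b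
  op_distrib : ∀ a b c, op (op a b) c = op (op a c) (op b c)

namespace QuandleOp

/-- The right translation `r_b : x ↦ x * b`, as a permutation of `Q`. -/
noncomputable def r {Q : Type*} (S : QuandleOp Q) (b : Q) : Equiv.Perm Q :=
  Equiv.ofBijective _ (S.op_bijective b)

/-- A quandle is connected if every element can be taken to every other element by a
finite composition of the maps `r_b` and their inverses, i.e. by an element of the
subgroup of permutations generated by the `r_b`. -/
def Connected {Q : Type*} (S : QuandleOp Q) : Prop :=
  ∀ a b : Q, ∃ g ∈ Subgroup.closure (Set.range S.r), g a = b

end QuandleOp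

/-- The element `n` of the quandle `{1, …, n}` modelled as `Fin n` (element `m`
corresponds to the index `m - 1`). -/
def theTop (n : ℕ) [NeZero n] : Fin n :=
  ⟨n - 1, Nat.sub_lt (Nat.pos_of_ne_zero (NeZero.ne n)) Nat.one_pos⟩

/-- `ν` is a natural reordering with respect to `r q`, realized by the presentation of
`r q` as the product of the disjoint cycles `(I s 0  I s 1 … I s (ℓ s - 1))` for
`s = 0, …, k-1` together with the fixed point `(q)`, where `1 ≤ ℓ 0 ≤ ⋯ ≤ ℓ (k-1)`:
it sends `q` to the top element `n` (index `n - 1`) and sends the `t`-th entry of the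
`s`-th cycle to the element with index `(ℓ 0 + ⋯ + ℓ (s-1)) + t`. -/
def IsNaturalReorderingWith {n : ℕ} (S : QuandleOp (Fin n)) (q : Fin n)
    (ν : Equiv.Perm (Fin n)) {k : ℕ} (ℓ : Fin k → ℕ)
    (I : (s : Fin k) → Fin (ℓ s) → Fin n) : Prop :=
  (ν q).val = n - 1 ∧
  (∀ s, 1 ≤ ℓ s) ∧
  Monotone ℓ ∧
  (∑ s, ℓ s) = n - 1 ∧
  Function.Injective (fun p : (s : Fin k) × Fin (ℓ s) => I p.1 p.2) ∧
  (∀ (s : Fin k) (t : Fin (ℓ s)), I s t ≠ q) ∧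
  (∀ (s : Fin k) (t : Fin (ℓ s)),
    S.op (I s t) q = I s ⟨(t.val + 1) % ℓ s, Nat.mod_lt _ (Nat.zero_lt_of_lt t.isLt)⟩) ∧
  (∀ (s : Fin k) (t : Fin (ℓ s)),
    (ν (I s t)).val = (∑ j ∈ Finset.Iio s, ℓ j) + t.val)

/-- `ν` is a natural reordering with respect to `r q` (for some presentation of `r q`
as a product of disjoint cycles of weakly increasing lengths, together with `(q)`). -/
def IsNaturalReordering {n : ℕ} (S : QuandleOp (Fin n)) (q : Fin n)
    (ν : Equiv.Perm (Fin n)) : Prop :=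
  ∃ (k : ℕ) (ℓ : Fin k → ℕ) (I : (s : Fin k) → Fin (ℓ s) → Fin n),
    IsNaturalReorderingWith S q ν ℓ I

/-- The elements of the quandle are naturally ordered with cycle lengths `ℓ`:
`r n` is decomposed into disjoint cycles in form (N), i.e. the identity reordering is a
natural reordering with respect to `r n` with cycle lengths `ℓ`.  (This also says that
the profile of the quandle is `{1, ℓ 0, …, ℓ (k-1)}`.) -/
def NaturallyOrderedWith {n : ℕ} [NeZero n] (S : QuandleOp (Fin n)) {k : ℕ}
    (ℓ : Fin k → ℕ) : Prop :=
  ∃ I, IsNaturalReorderingWith S (theTop n) (Equiv.refl (Fin n)) ℓ I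

/-- The elements of the quandle are naturally ordered (the quandle matrix is in
canonical form). -/
def NaturallyOrdered {n : ℕ} [NeZero n] (S : QuandleOp (Fin n)) : Prop :=
  ∃ (k : ℕ) (ℓ : Fin k → ℕ), NaturallyOrderedWith S ℓ

/-- The quandle operation (equivalently, the quandle matrix) obtained after reordering
the elements by the bijection `ν`: the new matrix has entry `ν (i * j)` in row `ν i`
and column `ν j`. -/
def reorderedOp {n : ℕ} (S : QuandleOp (Fin n)) (ν : Equiv.Perm (Fin n)) :
    Fin n → Fin n → Fin n :=
  fun i j => ν (S.op (ν.symm i) (ν.symm j))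

theorem QuandleOp.symm_op_of_map_op {Q : Type*} (S : QuandleOp Q) {ν : Equiv.Perm Q}
    (hν : ∀ a b, ν (S.op a b) = S.op (ν a) (ν b)) (a b : Q) :
    ν.symm (S.op a b) = S.op (ν.symm a) (ν.symm b) :=
  ν.symm_apply_eq.mpr <| by rw [hν, Equiv.apply_symm_apply, Equiv.apply_symm_apply]

/-- An automorphism `ν` conjugates `r (ν⁻¹ q)` to `r q`, so `ν⁻¹` carries the cycles of
`r q` onto those of `r (ν⁻¹ q)`. -/
theorem IsNaturalReorderingWith.comp_automorphism {n : ℕ} {S : QuandleOp (Fin n)}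
    {q : Fin n} {μ ν : Equiv.Perm (Fin n)} {k : ℕ} {ℓ : Fin k → ℕ}
    {I : (s : Fin k) → Fin (ℓ s) → Fin n} (h : IsNaturalReorderingWith S q μ ℓ I)
    (hν : ∀ a b, ν (S.op a b) = S.op (ν a) (ν b)) :
    IsNaturalReorderingWith S (ν.symm q) (ν.trans μ) ℓ (fun s t => ν.symm (I s t)) := by
  obtain ⟨hq, hpos, hmono, hsum, hinj, hne, hcycle, hpos_val⟩ := h
  refine ⟨by simpa using hq, hpos, hmono, hsum, fun p p' hp => hinj (ν.symm.injective hp),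
    fun s t => ν.symm.injective.ne (hne s t), fun s t => ?_,
    fun s t => by simpa using hpos_val s t⟩
  rw [← S.symm_op_of_map_op hν, hcycle]

theorem every_automorphism_is_natural_reordering_general
    {n : ℕ} [NeZero n] (S : QuandleOp (Fin n))
    (hord : NaturallyOrdered S) (ν : Equiv.Perm (Fin n))
    (hauto : ∀ a b, ν (S.op a b) = S.op (ν a) (ν b)) :
    IsNaturalReordering S (ν.symm (theTop n)) ν := by
  obtain ⟨k, ℓ, I, hI⟩ := hord
  exact ⟨k, ℓ, _, by simpa using hI.comp_automorphism hauto⟩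

/-- Theorem 1 of the paper: if the elements of a finite connected
quandle on `{1,…,n}` are naturally ordered, then every automorphism `ν` of the quandle
is a natural reordering, namely with respect to `r (ν⁻¹ n)`. -/
theorem every_automorphism_is_natural_reordering
    {n : ℕ} [NeZero n] (S : QuandleOp (Fin n)) (hconn : S.Connected)
    (hord : NaturallyOrdered S) (ν : Equiv.Perm (Fin n))
    (hauto : ∀ a b, ν (S.op a b) = S.op (ν a) (ν b)) :
    IsNaturalReordering S (ν.symm (theTop n)) ν :=
  every_automorphism_is_natural_reordering_general S hord ν hauto
end

section
/- Let Q be a finite connected quandle with its elements {1,2,…,n} naturally ordered and with profile {1, ℓ_1, ℓ_2, …, ℓ_k}, where 1 ≤ ℓ_1 ≤ ℓ_2 ≤ ⋯ ≤ ℓ_k. For any reordering μ which is natural with respect to r_q for some q ∈ Q, there is a natural reordering ν with respect to r_n such that the quandle matrices after reordering by μ and by ν coincide. Moreover, ν can be taken so that, for some integer m with 1 ≤ m ≤ k and ℓ_m = ℓ_k, one has ν((ℓ_1+⋯+ℓ_{m-1})+i) = (ℓ_1+⋯+ℓ_{k-1})+i for every integer i with 1 ≤ i ≤ ℓ_m.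 -/
/-!
Connectedness gives an element `g` of the inner automorphism group with `g q = n`.  Quandle
automorphisms do not change the reordered quandle matrix, and they carry the cycle
decomposition of `r q` to one of `r (g q)`; hence `μ * g⁻¹` is natural with respect to `r n`
and gives the same matrix as `μ`.  Cycle lengths are minimal periods, so they are preserved
and the last (longest) cycle of `μ`'s presentation lands on a longest cycle `m` of the
canonical form.  A further power of `r n`, again an automorphism fixing `n`, rotates that
image so that it starts at the first element of cycle `m`, which is the block condition.
-/

namespace QuandleOp

variable {Q : Type*} (S : QuandleOp Q)

theorem r_apply_self (b : Q) : S.r b b = b := S.op_self b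

def autGroup : Subgroup (Equiv.Perm Q) where
  carrier := {g | ∀ a b, g (S.op a b) = S.op (g a) (g b)}
  one_mem' _ _ := rfl
  mul_mem' {g h} hg hh a b := by
    simp only [Equiv.Perm.mul_apply]
    rw [hh a b, hg]
  inv_mem' {g} hg a b := by
    apply g.injective
    rw [hg]
    simp only [Equiv.Perm.coe_inv, Equiv.apply_symm_apply]

theorem r_mem_autGroup (c : Q) : S.r c ∈ S.autGroup := fun a b => S.op_distrib a b c

theorem closure_range_r_le_autGroup : Subgroup.closure (Set.range S.r) ≤ S.autGroup :=
  (Subgroup.closure_le _).2 (Set.range_subset_iff.2 S.r_mem_autGroup)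

end QuandleOp

theorem reorderedOp_mul_inv_of_mem_autGroup {n : ℕ} {S : QuandleOp (Fin n)}
    (ν : Equiv.Perm (Fin n)) {φ : Equiv.Perm (Fin n)} (hφ : φ ∈ S.autGroup) :
    reorderedOp S (ν * φ⁻¹) = reorderedOp S ν := by
  ext i j
  simp only [reorderedOp, mul_inv_rev, inv_inv, Equiv.Perm.mul_apply, ← Equiv.Perm.inv_def]
  rw [← hφ, Equiv.Perm.coe_inv, Equiv.symm_apply_apply]

section Cycle

variable {α : Type*} {f : α → α} {L : ℕ} {c : Fin L → α}

theorem iterate_apply_of_cycle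
    (hc : ∀ t : Fin L, f (c t) = c ⟨(t + 1) % L, Nat.mod_lt _ t.pos⟩) (j : ℕ) (t : Fin L) :
    f^[j] (c t) = c ⟨(t + j) % L, Nat.mod_lt _ t.pos⟩ := by
  induction j with
  | zero => simp [Nat.mod_eq_of_lt t.isLt]
  | succ j ih =>
    rw [Function.iterate_succ_apply', ih, hc]
    simp only [Nat.mod_add_mod, Nat.add_assoc]

theorem minimalPeriod_eq_of_cycle
    (hc : ∀ t : Fin L, f (c t) = c ⟨(t + 1) % L, Nat.mod_lt _ t.pos⟩)
    (hinj : Function.Injective c) (t : Fin L) :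
    Function.minimalPeriod f (c t) = L := by
  have hperiodic : ∀ j, Function.IsPeriodicPt f j (c t) ↔ L ∣ j := fun j => by
    rw [Function.IsPeriodicPt, Function.IsFixedPt, iterate_apply_of_cycle hc, hinj.eq_iff,
      Fin.ext_iff, ← Nat.modEq_zero_iff_dvd]
    conv_lhs => rhs; rw [← Nat.mod_eq_of_lt t.isLt, ← Nat.add_zero t.val]
    exact ⟨Nat.ModEq.add_left_cancel' _, Nat.ModEq.add_left _⟩
  exact Nat.dvd_antisymm
    (Function.isPeriodicPt_iff_minimalPeriod_dvd.1 ((hperiodic L).2 dvd_rfl))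
    ((hperiodic _).1 (Function.isPeriodicPt_minimalPeriod f _))

end Cycle

theorem Function.Injective.exists_apply_eq_of_card_eq_sub_one {α ι : Type*} [Fintype α]
    [Fintype ι] {F : ι → α} (hF : Function.Injective F) {q : α} (hq : ∀ i, F i ≠ q)
    (hcard : Fintype.card ι = Fintype.card α - 1) {x : α} (hx : x ≠ q) : ∃ i, F i = x := by
  classical
  let F' : ι → {y // y ≠ q} := fun i => ⟨F i, hq i⟩
  have hbij : Function.Bijective F' := (Fintype.bijective_iff_injective_and_card F').2
    ⟨fun i j hij => hF (congrArg Subtype.val hij), by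
      rw [hcard, Fintype.card_subtype_compl, Fintype.card_subtype_eq]⟩
  obtain ⟨i, hi⟩ := hbij.2 ⟨x, hx⟩
  exact ⟨i, congrArg Subtype.val hi⟩

theorem Finset.sum_Iio_add_eq_sum_of_isTop {α M : Type*} [Fintype α] [PartialOrder α]
    [LocallyFiniteOrderBot α] [AddCommMonoid M] (f : α → M) {a : α} (ha : IsTop a) :
    ∑ b ∈ Finset.Iio a, f b + f a = ∑ b, f b := by
  rw [Finset.sum_Iio_add_eq_sum_Iic]
  congr
  ext b
  simp [ha b]

namespace IsNaturalReorderingWith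

variable {n k k' : ℕ} {S : QuandleOp (Fin n)} {p q : Fin n} {ν ν' : Equiv.Perm (Fin n)}
  {ℓ : Fin k → ℕ} {I : (s : Fin k) → Fin (ℓ s) → Fin n}
  {ℓ' : Fin k' → ℕ} {J : (s : Fin k') → Fin (ℓ' s) → Fin n}

theorem one_le_length (h : IsNaturalReorderingWith S q ν ℓ I) (s : Fin k) : 1 ≤ ℓ s :=
  h.2.1 s

theorem monotone_length (h : IsNaturalReorderingWith S q ν ℓ I) : Monotone ℓ := h.2.2.1

theorem sum_length (h : IsNaturalReorderingWith S q ν ℓ I) : ∑ s, ℓ s = n - 1 := h.2.2.2.1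

theorem cycle_ne (h : IsNaturalReorderingWith S q ν ℓ I) (s : Fin k) (t : Fin (ℓ s)) :
    I s t ≠ q :=
  h.2.2.2.2.2.1 s t

theorem r_apply_cycle (h : IsNaturalReorderingWith S q ν ℓ I) (s : Fin k) (t : Fin (ℓ s)) :
    S.r q (I s t) = I s ⟨(t + 1) % ℓ s, Nat.mod_lt _ t.pos⟩ :=
  h.2.2.2.2.2.2.1 s t

theorem apply_cycle_val (h : IsNaturalReorderingWith S q ν ℓ I) (s : Fin k) (t : Fin (ℓ s)) :
    (ν (I s t)).val = ∑ j ∈ Finset.Iio s, ℓ j + t :=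
  h.2.2.2.2.2.2.2 s t

theorem injective_cycle (h : IsNaturalReorderingWith S q ν ℓ I) (s : Fin k) :
    Function.Injective (I s) := fun _ _ hab =>
  sigma_mk_injective (β := fun s => Fin (ℓ s)) (h.2.2.2.2.1 hab)

theorem minimalPeriod_r (h : IsNaturalReorderingWith S q ν ℓ I) (s : Fin k) (t : Fin (ℓ s)) :
    Function.minimalPeriod (S.r q) (I s t) = ℓ s :=
  minimalPeriod_eq_of_cycle (h.r_apply_cycle s) (h.injective_cycle s) t

theorem exists_cycle_eq_of_ne (h : IsNaturalReorderingWith S q ν ℓ I) {x : Fin n}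
    (hx : x ≠ q) :
    ∃ s t, I s t = x := by
  obtain ⟨⟨s, t⟩, hst⟩ := Function.Injective.exists_apply_eq_of_card_eq_sub_one h.2.2.2.2.1
    (fun st => h.cycle_ne st.1 st.2) (by simp [h.sum_length]) hx
  exact ⟨s, t, hst⟩

theorem map (h : IsNaturalReorderingWith S q ν ℓ I) {φ : Equiv.Perm (Fin n)}
    (hφ : φ ∈ S.autGroup) :
    IsNaturalReorderingWith S (φ q) (ν * φ⁻¹) ℓ (fun s t => φ (I s t)) := by
  obtain ⟨hq, hpos, hmono, hsum, hinj, hne, hcyc, hval⟩ := h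
  refine ⟨by simpa using hq, hpos, hmono, hsum, fun a b hab => hinj (φ.injective hab),
    fun s t => φ.injective.ne (hne s t), fun s t => ?_, fun s t => by simpa using hval s t⟩
  rw [← hφ, hcyc]

theorem exists_pow_map_cycle (hI : IsNaturalReorderingWith S p ν ℓ I)
    (hJ : IsNaturalReorderingWith S p ν' ℓ' J) (s' : Fin k') :
    ∃ (m : Fin k) (j : ℕ), ℓ m = ℓ' s' ∧
      ∀ i (hi : i < ℓ m) (hi' : i < ℓ' s'),
        (S.r p ^ j) (J s' ⟨i, hi'⟩) = I m ⟨i, hi⟩ := by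
  have h0 : 0 < ℓ' s' := hJ.one_le_length s'
  obtain ⟨m, t₀, ht₀⟩ := hI.exists_cycle_eq_of_ne (hJ.cycle_ne s' ⟨0, h0⟩)
  have hlen : ℓ m = ℓ' s' := by rw [← hI.minimalPeriod_r m t₀, ht₀, hJ.minimalPeriod_r]
  refine ⟨m, ℓ m - t₀, hlen, fun i hi hi' => ?_⟩
  have hJi : J s' ⟨i, hi'⟩ = (S.r p)^[i] (J s' ⟨0, h0⟩) := by
    rw [iterate_apply_of_cycle (hJ.r_apply_cycle s')]
    simp [Nat.mod_eq_of_lt hi']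
  rw [hJi, Equiv.Perm.coe_pow, ← Function.iterate_add_apply, ← ht₀,
    iterate_apply_of_cycle (hI.r_apply_cycle m)]
  have hwrap : t₀ + (ℓ m - t₀ + i) = i + ℓ m := by omega
  simp [hwrap, Nat.mod_eq_of_lt hi]

theorem length_eq_of_isTop (hI : IsNaturalReorderingWith S p ν ℓ I)
    (hJ : IsNaturalReorderingWith S p ν' ℓ' J) {last : Fin k} (hlast : IsTop last)
    {last' : Fin k'} (hlast' : IsTop last') : ℓ' last' = ℓ last := by
  obtain ⟨m, -, hm, -⟩ := hI.exists_pow_map_cycle hJ last'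
  obtain ⟨m', -, hm', -⟩ := hJ.exists_pow_map_cycle hI last
  have := hI.monotone_length (hlast m)
  have := hJ.monotone_length (hlast' m')
  omega

end IsNaturalReorderingWith

/-- Theorem 2 of the paper: let the elements of a finite connected
quandle on `{1,…,n}` be naturally ordered, with profile `{1, ℓ 0, …, ℓ (k-1)}`.
For any reordering `μ` natural with respect to some `r q`, there is a reordering `ν`
natural with respect to `r n` producing the same reordered quandle matrix as `μ`;
moreover `ν` can be taken so that for some `m` with `ℓ m = ℓ (k-1)`, `ν` sends the
element with index `(ℓ 0 + ⋯ + ℓ (m-1)) + i` to the element with index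
`(ℓ 0 + ⋯ + ℓ (k-2)) + i` for every `i < ℓ m`. -/
theorem exists_natural_reordering_same_matrix
    {n k : ℕ} [NeZero n] (hk : 0 < k) (S : QuandleOp (Fin n)) (hconn : S.Connected)
    (ℓ : Fin k → ℕ) (hord : NaturallyOrderedWith S ℓ)
    (q : Fin n) (μ : Equiv.Perm (Fin n)) (hμ : IsNaturalReordering S q μ) :
    ∃ ν : Equiv.Perm (Fin n),
      IsNaturalReordering S (theTop n) ν ∧
      (∀ i j, reorderedOp S μ i j = reorderedOp S ν i j) ∧
      ∃ m : Fin k, ℓ m = ℓ ⟨k - 1, by omega⟩ ∧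
        ∀ i : ℕ, i < ℓ m → ∀ a : Fin n,
          a.val = (∑ j ∈ Finset.Iio m, ℓ j) + i →
          (ν a).val = (∑ j ∈ Finset.Iio (⟨k - 1, by omega⟩ : Fin k), ℓ j) + i := by
  obtain ⟨I, hI⟩ := hord
  obtain ⟨k', ℓ', J, hJ⟩ := hμ
  obtain ⟨g, hg, hgq⟩ := hconn q (theTop n)
  have hgAut := S.closure_range_r_le_autGroup hg
  have hJg := hJ.map hgAut
  rw [hgq] at hJg
  have hlast : IsTop (⟨k - 1, by omega⟩ : Fin k) := fun s => Nat.le_sub_one_of_lt s.isLt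
  obtain ⟨s', -⟩ :=
    hJg.exists_cycle_eq_of_ne (hI.cycle_ne ⟨k - 1, by omega⟩ ⟨0, hI.one_le_length _⟩)
  have hk' : 0 < k' := s'.pos
  have hlast' : IsTop (⟨k' - 1, by omega⟩ : Fin k') := fun s => Nat.le_sub_one_of_lt s.isLt
  obtain ⟨m, j, hm, halign⟩ := hI.exists_pow_map_cycle hJg ⟨k' - 1, by omega⟩
  have hlen := hI.length_eq_of_isTop hJg hlast hlast'
  have hψ : S.r (theTop n) ^ j ∈ S.autGroup := pow_mem (S.r_mem_autGroup _) j
  have hν := hJg.map hψ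
  rw [Equiv.Perm.pow_apply_eq_self_of_apply_eq_self (S.r_apply_self _)] at hν
  refine ⟨μ * g⁻¹ * (S.r (theTop n) ^ j)⁻¹, ⟨k', ℓ', _, hν⟩, fun i i' => ?_,
    m, hm.trans hlen, fun i hi a ha => ?_⟩
  · rw [reorderedOp_mul_inv_of_mem_autGroup _ hψ, reorderedOp_mul_inv_of_mem_autGroup _ hgAut]
  · obtain rfl : a = I m ⟨i, hi⟩ := Fin.ext (ha.trans (hI.apply_cycle_val m ⟨i, hi⟩).symm)
    rw [← halign i hi (by omega), hν.apply_cycle_val]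
    -- both sums equal `(n - 1) - ℓ (k - 1)`
    have := Finset.sum_Iio_add_eq_sum_of_isTop ℓ hlast
    have := Finset.sum_Iio_add_eq_sum_of_isTop ℓ' hlast'
    have := hI.sum_length
    have := hJ.sum_length
    dsimp only
    omega
end

section
/- Let Q be a finite connected quandle whose underlying set is {1,2,…,n} and whose elements are naturally ordered. Let μ be a natural reordering with respect to r_q for some q ∈ Q, and let ν be a natural reordering with respect to r_n. Then the composition ν ∘ μ is a natural reordering with respect to r_q. -/
/-! Connectedness makes every right translation `r q` conjugate to `r n` (the inner
group acts by quandle automorphisms), so all of them have the same cycle lengths; these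
are read off from the minimal periods of the points. With the cycle lengths of the
natural ordering fixed, `μ` is a natural reordering with respect to `r q` exactly when
`μ q = n` and `μ ∘ r q = r n ∘ μ`, and this is preserved by composing with a `ν` that
commutes with `r n`. -/

open Finset Function

/-- `σ` is the product of the disjoint cycles `(I s 0 … I s (ℓ s - 1))` and the fixed
point `(q)`. -/
structure IsCycleDecomposition {α : Type*} (σ : Equiv.Perm α) (q : α) {k : ℕ}
    (ℓ : Fin k → ℕ) (I : (s : Fin k) → Fin (ℓ s) → α) : Prop where
  length_pos : ∀ s, 0 < ℓ s
  injective : Injective fun p : (s : Fin k) × Fin (ℓ s) => I p.1 p.2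
  ne : ∀ s t, I s t ≠ q
  exists_eq : ∀ x, x ≠ q → ∃ s t, I s t = x
  apply_eq : ∀ s t, σ (I s t) = I s ⟨(t.val + 1) % ℓ s, Nat.mod_lt _ t.pos⟩

namespace IsCycleDecomposition

variable {α : Type*} {σ : Equiv.Perm α} {q : α} {k : ℕ} {ℓ : Fin k → ℕ}
  {I : (s : Fin k) → Fin (ℓ s) → α}

theorem conj (h : IsCycleDecomposition σ q ℓ I) (g : Equiv.Perm α) :
    IsCycleDecomposition (g * σ * g⁻¹) (g q) ℓ fun s t => g (I s t) where
  length_pos := h.length_pos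
  injective := g.injective.comp h.injective
  ne s t := g.injective.ne (h.ne s t)
  exists_eq x hx := by
    obtain ⟨s, t, hst⟩ := h.exists_eq (g⁻¹ x) (mt Equiv.Perm.inv_eq_iff_eq.mp hx)
    exact ⟨s, t, by simp [hst]⟩
  apply_eq s t := by simp [h.apply_eq]

theorem apply_eq_iff (h : IsCycleDecomposition σ q ℓ I) {s : Fin k} {t t' : Fin (ℓ s)} :
    I s t = I s t' ↔ t = t' :=
  ⟨fun e => eq_of_heq (Sigma.mk.inj_iff.mp (h.injective e)).2, congrArg _⟩

theorem iterate_apply (h : IsCycleDecomposition σ q ℓ I) (s : Fin k) (t : Fin (ℓ s))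
    (m : ℕ) : (⇑σ)^[m] (I s t) = I s ⟨(t.val + m) % ℓ s, Nat.mod_lt _ t.pos⟩ := by
  induction m with
  | zero => simp [Nat.mod_eq_of_lt t.isLt]
  | succ m ih =>
    rw [iterate_succ_apply', ih, h.apply_eq]
    simp [Nat.mod_add_mod, Nat.add_assoc]

theorem minimalPeriod_apply (h : IsCycleDecomposition σ q ℓ I) (s : Fin k)
    (t : Fin (ℓ s)) : minimalPeriod σ (I s t) = ℓ s := by
  have hper : ∀ m, IsPeriodicPt σ m (I s t) ↔ ℓ s ∣ m := fun m => by
    rw [IsPeriodicPt, IsFixedPt, h.iterate_apply, h.apply_eq_iff, Fin.ext_iff,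
      ← Nat.add_modEq_left_iff, Nat.ModEq, Nat.mod_eq_of_lt t.isLt]
  exact Nat.dvd_antisymm (isPeriodicPt_iff_minimalPeriod_dvd.mp ((hper _).mpr dvd_rfl))
    ((hper _).mp (isPeriodicPt_minimalPeriod _ _))

variable [Fintype α] [DecidableEq α]

theorem card_filter_minimalPeriod_eq (h : IsCycleDecomposition σ q ℓ I) (m : ℕ) :
    #{x | x ≠ q ∧ minimalPeriod σ x = m} = m * #{s | ℓ s = m} := by
  calc #{x | x ≠ q ∧ minimalPeriod σ x = m}
      = #{p : (s : Fin k) × Fin (ℓ s) | ℓ p.1 = m} := by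
        symm
        refine card_bij (fun p _ => I p.1 p.2) (fun p hp => ?_)
          (fun p _ p' _ e => h.injective e) (fun x hx => ?_)
        · simp_all [h.ne, h.minimalPeriod_apply]
        · simp only [mem_filter, mem_univ, true_and] at hx
          obtain ⟨s, t, rfl⟩ := h.exists_eq x hx.1
          exact ⟨⟨s, t⟩, by simpa [h.minimalPeriod_apply] using hx.2, rfl⟩
    _ = m * #{s | ℓ s = m} := by
        rw [card_filter, card_filter, Fintype.sum_sigma, mul_sum]
        refine sum_congr rfl fun s _ => ?_
        split_ifs with hs <;> simp [hs]

theorem map_length_eq {k₁ k₂ : ℕ} {ℓ₁ : Fin k₁ → ℕ} {ℓ₂ : Fin k₂ → ℕ}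
    {I₁ : (s : Fin k₁) → Fin (ℓ₁ s) → α} {I₂ : (s : Fin k₂) → Fin (ℓ₂ s) → α}
    (h₁ : IsCycleDecomposition σ q ℓ₁ I₁) (h₂ : IsCycleDecomposition σ q ℓ₂ I₂) :
    univ.val.map ℓ₁ = univ.val.map ℓ₂ := by
  ext m
  simp only [Multiset.count_map, ← filter_val, ← card_def, eq_comm (a := m)]
  rcases Nat.eq_zero_or_pos m with rfl | hm
  · simp [(h₁.length_pos _).ne', (h₂.length_pos _).ne']
  · exact Nat.eq_of_mul_eq_mul_left hm
      ((h₁.card_filter_minimalPeriod_eq m).symm.trans (h₂.card_filter_minimalPeriod_eq m))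

end IsCycleDecomposition

theorem Fin.sigma_eq_of_monotone_of_map_univ_eq {β : Type*} [LinearOrder β] {k₁ k₂ : ℕ}
    {f₁ : Fin k₁ → β} {f₂ : Fin k₂ → β} (h₁ : Monotone f₁) (h₂ : Monotone f₂)
    (h : univ.val.map f₁ = univ.val.map f₂) :
    (⟨k₁, f₁⟩ : (k : ℕ) × (Fin k → β)) = ⟨k₂, f₂⟩ := by
  rw [Fin.univ_val_map, Fin.univ_val_map, Multiset.coe_eq_coe] at h
  exact List.ofFn_inj'.mp
    (h.eq_of_sortedLE (List.sortedLE_ofFn_iff.mpr h₁) (List.sortedLE_ofFn_iff.mpr h₂))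

namespace QuandleOp

variable {Q : Type*} (S : QuandleOp Q)

@[simp]
theorem r_apply (b x : Q) : S.r b x = S.op x b := rfl

theorem mul_r_mul_inv_of_mem_closure {g : Equiv.Perm Q}
    (hg : g ∈ Subgroup.closure (Set.range S.r)) (b : Q) : g * S.r b * g⁻¹ = S.r (g b) := by
  induction hg using Subgroup.closure_induction generalizing b with
  | mem g hg =>
    obtain ⟨c, rfl⟩ := hg
    exact mul_inv_eq_iff_eq_mul.mpr (Equiv.ext fun x => S.op_distrib x b c)
  | one => simp
  | mul x y _ _ ihx ihy =>
    calc x * y * S.r b * (x * y)⁻¹ = x * (y * S.r b * y⁻¹) * x⁻¹ := by group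
      _ = S.r ((x * y) b) := by rw [ihy, ihx, Equiv.Perm.mul_apply]
  | inv x _ ihx =>
    calc x⁻¹ * S.r b * x⁻¹⁻¹ = x⁻¹ * (x * S.r (x⁻¹ b) * x⁻¹) * x := by
          rw [ihx]; simp
      _ = S.r (x⁻¹ b) := by group

end QuandleOp

namespace IsNaturalReorderingWith

variable {n : ℕ} {S : QuandleOp (Fin n)} {q : Fin n} {ν : Equiv.Perm (Fin n)}
  {k : ℕ} {ℓ : Fin k → ℕ} {I I₀ : (s : Fin k) → Fin (ℓ s) → Fin n}

theorem isCycleDecomposition (h : IsNaturalReorderingWith S q ν ℓ I) :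
    IsCycleDecomposition (S.r q) q ℓ I := by
  obtain ⟨-, hpos, -, hsum, hinj, hne, hop, -⟩ := h
  refine ⟨hpos, hinj, hne, fun x hx => ?_, hop⟩
  have hbij : Bijective fun p : (s : Fin k) × Fin (ℓ s) =>
      (⟨I p.1 p.2, hne _ _⟩ : {y // y ≠ q}) := by
    rw [Fintype.bijective_iff_injective_and_card]
    exact ⟨fun p p' e => hinj (congrArg Subtype.val e),
      by simp [Fintype.card_subtype_compl, hsum]⟩
  obtain ⟨p, hp⟩ := hbij.2 ⟨x, hx⟩
  exact ⟨p.1, p.2, congrArg Subtype.val hp⟩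

theorem apply_eq_theTop [NeZero n] (h : IsNaturalReorderingWith S q ν ℓ I) :
    ν q = theTop n :=
  Fin.ext h.1

theorem apply_eq [NeZero n] (h : IsNaturalReorderingWith S q ν ℓ I)
    (h₀ : IsNaturalReorderingWith S (theTop n) (Equiv.refl _) ℓ I₀) (s : Fin k)
    (t : Fin (ℓ s)) : ν (I s t) = I₀ s t :=
  Fin.ext ((h.2.2.2.2.2.2.2 s t).trans (h₀.2.2.2.2.2.2.2 s t).symm)

theorem mul_r_eq [NeZero n] (h : IsNaturalReorderingWith S q ν ℓ I)
    (h₀ : IsNaturalReorderingWith S (theTop n) (Equiv.refl _) ℓ I₀) :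
    ν * S.r q = S.r (theTop n) * ν := by
  have hd := h.isCycleDecomposition
  ext1 x
  rcases eq_or_ne x q with rfl | hx
  · simp [S.op_self, h.apply_eq_theTop]
  · obtain ⟨s, t, rfl⟩ := hd.exists_eq x hx
    rw [Equiv.Perm.mul_apply, hd.apply_eq, h.apply_eq h₀, Equiv.Perm.mul_apply,
      h.apply_eq h₀, h₀.isCycleDecomposition.apply_eq]

theorem of_mul_r_eq [NeZero n]
    (h₀ : IsNaturalReorderingWith S (theTop n) (Equiv.refl _) ℓ I₀)
    (hq : ν q = theTop n) (hν : ν * S.r q = S.r (theTop n) * ν) :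
    IsNaturalReorderingWith S q ν ℓ fun s t => ν⁻¹ (I₀ s t) := by
  obtain ⟨-, hpos, hmono, hsum, hinj, hne, hop, hidx⟩ := h₀
  refine ⟨congrArg Fin.val hq, hpos, hmono, hsum, ν⁻¹.injective.comp hinj,
    fun s t e => hne s t ?_, fun s t => ?_, fun s t => by simpa using hidx s t⟩
  · simp [← hq, ← e]
  · apply ν.injective
    simpa [← hop] using Equiv.congr_fun hν (ν⁻¹ (I₀ s t))

theorem sigma_length_eq [NeZero n] {k' : ℕ} {ℓ' : Fin k' → ℕ}
    {I' : (s : Fin k') → Fin (ℓ' s) → Fin n} (h : IsNaturalReorderingWith S q ν ℓ' I')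
    (hconn : S.Connected) (h₀ : IsNaturalReorderingWith S (theTop n) (Equiv.refl _) ℓ I₀) :
    (⟨k', ℓ'⟩ : (k : ℕ) × (Fin k → ℕ)) = ⟨k, ℓ⟩ := by
  obtain ⟨g, hg, rfl⟩ := hconn (theTop n) q
  have hd₀ := h₀.isCycleDecomposition.conj g
  rw [S.mul_r_mul_inv_of_mem_closure hg] at hd₀
  exact Fin.sigma_eq_of_monotone_of_map_univ_eq h.2.2.1 h₀.2.2.1
    (h.isCycleDecomposition.map_length_eq hd₀)

end IsNaturalReorderingWith

/-- Lemma `composite` of the paper: let the elements of a finite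
connected quandle on `{1,…,n}` be naturally ordered.  If `μ` is a natural reordering
with respect to `r q` and `ν` is a natural reordering with respect to `r n`, then the
composition `ν ∘ μ` is a natural reordering with respect to `r q`. -/
theorem natural_reordering_comp
    {n : ℕ} [NeZero n] (S : QuandleOp (Fin n)) (hconn : S.Connected)
    (hord : NaturallyOrdered S) (q : Fin n) (μ ν : Equiv.Perm (Fin n))
    (hμ : IsNaturalReordering S q μ) (hν : IsNaturalReordering S (theTop n) ν) :
    IsNaturalReordering S q (ν * μ) := by
  obtain ⟨k, ℓ, I₀, h₀⟩ := hord
  obtain ⟨kμ, ℓμ, Iμ, hμ⟩ := hμ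
  obtain ⟨kν, ℓν, Iν, hν⟩ := hν
  cases hμ.sigma_length_eq hconn h₀
  cases hν.sigma_length_eq hconn h₀
  refine ⟨k, ℓ, _, .of_mul_r_eq h₀ ?_ ?_⟩
  · rw [Equiv.Perm.mul_apply, hμ.apply_eq_theTop, hν.apply_eq_theTop]
  · rw [mul_assoc, hμ.mul_r_eq h₀, ← mul_assoc, hν.mul_r_eq h₀, mul_assoc]
end

section
/- Let Q be a finite connected quandle whose underlying set is {1,2,…,n} and whose profile is {1, ℓ_1, ℓ_2, …, ℓ_k} with 1 ≤ ℓ_1 < ℓ_2 < ⋯ < ℓ_k. Then the total number of natural reorderings of Q (i.e., bijections ν of {1,2,…,n} that are natural reorderings with respect to r_q for some q ∈ Q) is exactly n·ℓ_1·ℓ_2⋯ℓ_k. -/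
/-- A presentation of `r q` as a product of disjoint cycles
`(I s 0 … I s (ℓ s - 1))`, `s = 0, …, k-1`, of weakly increasing lengths `≥ 1`,
together with the fixed point `(q)`. -/
def IsCyclePresentation {n : ℕ} (S : QuandleOp (Fin n)) (q : Fin n)
    {k : ℕ} (ℓ : Fin k → ℕ) (I : (s : Fin k) → Fin (ℓ s) → Fin n) : Prop :=
  (∀ s, 1 ≤ ℓ s) ∧
  Monotone ℓ ∧
  (∑ s, ℓ s) = n - 1 ∧
  Function.Injective (fun p : (s : Fin k) × Fin (ℓ s) => I p.1 p.2) ∧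
  (∀ (s : Fin k) (t : Fin (ℓ s)), I s t ≠ q) ∧
  (∀ (s : Fin k) (t : Fin (ℓ s)),
    S.op (I s t) q = I s ⟨(t.val + 1) % ℓ s, Nat.mod_lt _ (Nat.zero_lt_of_lt t.isLt)⟩)

/-!
The cycles of `r_q` other than the fixed point `q` have pairwise distinct lengths, so two
presentations of `r_q` as in (N) list the same cycles in the same order and differ only in
the starting point of each cycle: there are `ℓ 0 ⋯ ℓ (k-1)` of them. A natural reordering
`ν` recovers `q = ν⁻¹ (n)` and its presentation (the `t`-th entry of the `s`-th cycle is
`ν⁻¹ (ℓ 0 + ⋯ + ℓ (s-1) + t)`), and conversely is determined by them, whence the count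
`n · ℓ 0 ⋯ ℓ (k-1)`.
-/

open Finset Function

section CyclicShift

variable {m : ℕ}

def cyclicShift (t : Fin m) (a : ℕ) : Fin m :=
  ⟨(t + a) % m, Nat.mod_lt _ (Nat.zero_lt_of_lt t.isLt)⟩

@[simp]
lemma val_cyclicShift (t : Fin m) (a : ℕ) : (cyclicShift t a : ℕ) = (t + a) % m := rfl

@[simp]
lemma cyclicShift_zero (t : Fin m) : cyclicShift t 0 = t :=
  Fin.ext (by simp [Nat.mod_eq_of_lt t.isLt])

lemma cyclicShift_cyclicShift (t : Fin m) (a b : ℕ) :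
    cyclicShift (cyclicShift t a) b = cyclicShift t (a + b) :=
  Fin.ext (by simp [Nat.mod_add_mod, add_assoc])

lemma cyclicShift_cyclicShift_val (c t : Fin m) (a : ℕ) :
    cyclicShift c (cyclicShift t a) = cyclicShift (cyclicShift c t) a :=
  Fin.ext (by simp [Nat.add_mod_mod, Nat.mod_add_mod, add_assoc])

lemma cyclicShift_sub_add (b u : Fin m) : cyclicShift b (m - b + u) = u :=
  Fin.ext (by simp [show (b : ℕ) + (m - b + u) = u + m by omega, Nat.mod_eq_of_lt u.isLt])

lemma zero_cyclicShift (h : 0 < m) (t : Fin m) : cyclicShift ⟨0, h⟩ t = t :=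
  Fin.ext (by simp [Nat.mod_eq_of_lt t.isLt])

lemma cyclicShift_val_injective (c : Fin m) : Injective fun t : Fin m => cyclicShift c t :=
  fun t t' h => Fin.ext <|
    (Nat.ModEq.add_left_cancel' c (congrArg Fin.val h)).eq_of_lt_of_lt t.isLt t'.isLt

end CyclicShift

lemma finSigmaFinEquiv_val {k : ℕ} {ℓ : Fin k → ℕ} (p : (s : Fin k) × Fin (ℓ s)) :
    (finSigmaFinEquiv p : ℕ) = ∑ j ∈ Iio p.1, ℓ j + p.2 := by
  rw [finSigmaFinEquiv_apply]
  congr 1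
  refine (Finset.sum_map univ (Fin.castLEEmb p.1.2.le) ℓ).symm.trans (congrArg (∑ j ∈ ·, ℓ j) ?_)
  ext j
  simp only [mem_map, mem_univ, true_and, Fin.coe_castLEEmb, mem_Iio]
  exact ⟨fun ⟨i, hi⟩ => hi ▸ i.isLt, fun h => ⟨⟨j, h⟩, rfl⟩⟩

lemma bijective_sumElim_const {α β : Type*} [Fintype α] [Fintype β] {g : α → β}
    (hg : Injective g) {b : β} (hb : ∀ a, g a ≠ b)
    (hcard : Fintype.card α + 1 = Fintype.card β) :
    Bijective (Sum.elim g fun _ : Unit => b) :=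
  (Fintype.bijective_iff_injective_and_card _).2
    ⟨hg.sumElim (fun _ _ _ => rfl) fun a _ => hb a, by simp [hcard]⟩

/-- The enumeration of `Fin n` in form (N): the `t`-th entry of the `s`-th block goes to
position `ℓ 0 + ⋯ + ℓ (s-1) + t`, and the extra point to the top position `n - 1`. -/
noncomputable def blockEquiv {n k : ℕ} {ℓ : Fin k → ℕ} (hsum : ∑ s, ℓ s = n - 1) (hn : 0 < n) :
    ((s : Fin k) × Fin (ℓ s)) ⊕ Unit ≃ Fin n :=
  Equiv.ofBijective _ <| bijective_sumElim_const
    (g := fun p => Fin.castLE (n.sub_le 1) (Fin.cast hsum (finSigmaFinEquiv p)))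
    (b := ⟨n - 1, Nat.sub_lt hn one_pos⟩)
    ((Fin.castLE_injective _).comp ((Fin.cast_injective _).comp finSigmaFinEquiv.injective))
    (fun p h => (Fin.cast hsum (finSigmaFinEquiv p)).isLt.ne (congrArg Fin.val h))
    (by simp only [Fintype.card_sigma, Fintype.card_fin, hsum]; omega)

def rotateCycles {n k : ℕ} {ℓ : Fin k → ℕ} (I : (s : Fin k) → Fin (ℓ s) → Fin n)
    (c : (s : Fin k) → Fin (ℓ s)) (s : Fin k) (t : Fin (ℓ s)) : Fin n :=
  I s (cyclicShift (c s) t)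

lemma isNaturalReorderingWith_iff {n : ℕ} {S : QuandleOp (Fin n)} {q : Fin n}
    {ν : Equiv.Perm (Fin n)} {k : ℕ} {ℓ : Fin k → ℕ} {I : (s : Fin k) → Fin (ℓ s) → Fin n} :
    IsNaturalReorderingWith S q ν ℓ I ↔ (ν q : ℕ) = n - 1 ∧ IsCyclePresentation S q ℓ I ∧
      ∀ s t, (ν (I s t) : ℕ) = ∑ j ∈ Iio s, ℓ j + t := by
  simp only [IsNaturalReorderingWith, IsCyclePresentation, and_assoc]

namespace IsCyclePresentation

variable {n : ℕ} {S : QuandleOp (Fin n)} {q : Fin n} {k : ℕ} {ℓ : Fin k → ℕ}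
  {I : (s : Fin k) → Fin (ℓ s) → Fin n}

lemma apply_injective (h : IsCyclePresentation S q ℓ I) (s : Fin k) : Injective (I s) :=
  fun t t' e => eq_of_heq (Sigma.mk.inj_iff.1 (h.2.2.2.1 (a₁ := ⟨s, t⟩) (a₂ := ⟨s, t'⟩) e)).2

lemma fst_eq_of_apply_eq (h : IsCyclePresentation S q ℓ I) {s s' : Fin k} {t : Fin (ℓ s)}
    {t' : Fin (ℓ s')} (e : I s t = I s' t') : s = s' :=
  congrArg Sigma.fst (h.2.2.2.1 (a₁ := ⟨s, t⟩) (a₂ := ⟨s', t'⟩) e)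

noncomputable def equiv (h : IsCyclePresentation S q ℓ I) :
    ((s : Fin k) × Fin (ℓ s)) ⊕ Unit ≃ Fin n :=
  Equiv.ofBijective _ <| bijective_sumElim_const h.2.2.2.1 (fun p => h.2.2.2.2.1 p.1 p.2)
    (by simp only [Fintype.card_sigma, Fintype.card_fin, h.2.2.1]; have := q.pos; omega)

lemma exists_apply_eq (h : IsCyclePresentation S q ℓ I) {x : Fin n} (hx : x ≠ q) :
    ∃ s t, I s t = x := by
  obtain ⟨⟨s, t⟩ | ⟨⟩, rfl⟩ := h.equiv.surjective x
  exacts [⟨s, t, rfl⟩, absurd rfl hx]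

noncomputable def reordering (h : IsCyclePresentation S q ℓ I) : Equiv.Perm (Fin n) :=
  h.equiv.symm.trans (blockEquiv h.2.2.1 q.pos)

lemma reordering_apply_equiv (h : IsCyclePresentation S q ℓ I)
    (x : ((s : Fin k) × Fin (ℓ s)) ⊕ Unit) :
    h.reordering (h.equiv x) = blockEquiv h.2.2.1 q.pos x := by
  simp [reordering]

lemma val_reordering_self (h : IsCyclePresentation S q ℓ I) : (h.reordering q : ℕ) = n - 1 :=
  congrArg Fin.val (h.reordering_apply_equiv (.inr ()))

lemma val_reordering_apply (h : IsCyclePresentation S q ℓ I) (s : Fin k) (t : Fin (ℓ s)) :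
    (h.reordering (I s t) : ℕ) = ∑ j ∈ Iio s, ℓ j + t :=
  (congrArg Fin.val (h.reordering_apply_equiv (.inl ⟨s, t⟩))).trans (finSigmaFinEquiv_val _)

lemma isNaturalReorderingWith_reordering (h : IsCyclePresentation S q ℓ I) :
    IsNaturalReorderingWith S q h.reordering ℓ I :=
  isNaturalReorderingWith_iff.2 ⟨h.val_reordering_self, h, h.val_reordering_apply⟩

lemma eq_reordering (h : IsCyclePresentation S q ℓ I) {ν : Equiv.Perm (Fin n)}
    (hν : IsNaturalReorderingWith S q ν ℓ I) : ν = h.reordering := by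
  obtain ⟨hq, -, hI⟩ := isNaturalReorderingWith_iff.1 hν
  ext1 x
  obtain ⟨⟨s, t⟩ | ⟨⟩, rfl⟩ := h.equiv.surjective x
  exacts [Fin.ext ((hI s t).trans (h.val_reordering_apply s t).symm),
    Fin.ext (hq.trans h.val_reordering_self.symm)]

lemma iterate_op_apply (h : IsCyclePresentation S q ℓ I) (m : ℕ) (s : Fin k) (t : Fin (ℓ s)) :
    (S.op · q)^[m] (I s t) = I s (cyclicShift t m) := by
  induction m with
  | zero => simp
  | succ m ih =>
    rw [Function.iterate_succ_apply', ih, h.2.2.2.2.2, ← cyclicShift_cyclicShift]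
    rfl

lemma rotateCycles (h : IsCyclePresentation S q ℓ I) (c : (s : Fin k) → Fin (ℓ s)) :
    IsCyclePresentation S q ℓ (rotateCycles I c) := by
  obtain ⟨hpos, hmono, hsum, hinj, hne, hop⟩ := h
  refine ⟨hpos, hmono, hsum, fun ⟨s, t⟩ ⟨s', t'⟩ e => ?_, fun s t => hne s _, fun s t => ?_⟩
  · obtain ⟨rfl, ht⟩ := Sigma.mk.inj_iff.1
      (hinj (a₁ := ⟨s, cyclicShift (c s) t⟩) (a₂ := ⟨s', cyclicShift (c s') t'⟩) e)
    rw [(cyclicShift_val_injective (c s)) (eq_of_heq ht)]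
  · exact (hop s _).trans (congrArg (I s) (cyclicShift_cyclicShift_val _ _ 1).symm)

section SecondPresentation

variable {k' : ℕ} {ℓ' : Fin k' → ℕ} {I' : (s : Fin k') → Fin (ℓ' s) → Fin n}

lemma range_subset_of_apply_eq (h : IsCyclePresentation S q ℓ I)
    (h' : IsCyclePresentation S q ℓ' I') {s : Fin k} {s' : Fin k'} {a : Fin (ℓ s)}
    {b : Fin (ℓ' s')} (hab : I s a = I' s' b) : Set.range (I' s') ⊆ Set.range (I s) := by
  rintro _ ⟨u, rfl⟩
  refine ⟨cyclicShift a (ℓ' s' - b + u), ?_⟩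
  rw [← h.iterate_op_apply, hab, h'.iterate_op_apply, cyclicShift_sub_add]

lemma length_eq_of_apply_eq (h : IsCyclePresentation S q ℓ I)
    (h' : IsCyclePresentation S q ℓ' I') {s : Fin k} {s' : Fin k'} {a : Fin (ℓ s)}
    {b : Fin (ℓ' s')} (hab : I s a = I' s' b) : ℓ s = ℓ' s' := by
  have hrange := (h'.range_subset_of_apply_eq h hab.symm).antisymm
    (h.range_subset_of_apply_eq h' hab)
  simpa [Set.ncard_range_of_injective (h.apply_injective s),
    Set.ncard_range_of_injective (h'.apply_injective s')] using congrArg Set.ncard hrange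

lemma exists_injective_comp_eq (h : IsCyclePresentation S q ℓ I)
    (h' : IsCyclePresentation S q ℓ' I') : ∃ F : Fin k' → Fin k, Injective F ∧ ℓ ∘ F = ℓ' := by
  choose F a ha using fun s' => h.exists_apply_eq (h'.2.2.2.2.1 s' ⟨0, h'.1 s'⟩)
  refine ⟨F, fun s₁ s₂ hF => ?_, funext fun s' => h.length_eq_of_apply_eq h' (ha s')⟩
  have hrange : Set.range (I' s₁) ⊆ Set.range (I' s₂) :=
    (h.range_subset_of_apply_eq h' (ha s₁)).trans
      (hF ▸ h'.range_subset_of_apply_eq h (ha s₂).symm)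
  obtain ⟨u, hu⟩ := hrange ⟨⟨0, h'.1 s₁⟩, rfl⟩
  exact h'.fst_eq_of_apply_eq hu.symm

lemma card_eq (h : IsCyclePresentation S q ℓ I) (h' : IsCyclePresentation S q ℓ' I') :
    k' = k := by
  obtain ⟨F, hF, -⟩ := h.exists_injective_comp_eq h'
  obtain ⟨G, hG, -⟩ := h'.exists_injective_comp_eq h
  simpa using (Fintype.card_le_of_injective F hF).antisymm (Fintype.card_le_of_injective G hG)

end SecondPresentation

lemma lengths_eq {ℓ' : Fin k → ℕ} {I' : (s : Fin k) → Fin (ℓ' s) → Fin n}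
    (h : IsCyclePresentation S q ℓ I) (hℓ : StrictMono ℓ) (h' : IsCyclePresentation S q ℓ' I') :
    ℓ' = ℓ := by
  obtain ⟨F, hF, hℓF⟩ := h.exists_injective_comp_eq h'
  have hFmono : Monotone F := fun a b hab =>
    hℓ.le_iff_le.1 (by simpa only [← hℓF, Function.comp_apply] using h'.2.1 hab)
  rw [← hℓF, (hFmono.strictMono_of_injective hF).eq_id, Function.comp_id]

lemma exists_rotateCycles_eq {I' : (s : Fin k) → Fin (ℓ s) → Fin n}
    (h : IsCyclePresentation S q ℓ I) (hℓ : StrictMono ℓ) (h' : IsCyclePresentation S q ℓ I') :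
    ∃ c, I' = _root_.rotateCycles I c := by
  have hstart : ∀ s, ∃ c, I s c = I' s ⟨0, h'.1 s⟩ := fun s => by
    obtain ⟨s₀, c, hc⟩ := h.exists_apply_eq (h'.2.2.2.2.1 s ⟨0, h'.1 s⟩)
    obtain rfl : s₀ = s := hℓ.injective (h.length_eq_of_apply_eq h' hc)
    exact ⟨c, hc⟩
  choose c hc using hstart
  refine ⟨c, funext fun s => funext fun t => ?_⟩
  rw [_root_.rotateCycles, ← h.iterate_op_apply, hc, h'.iterate_op_apply, zero_cyclicShift]

end IsCyclePresentation

section Counting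

variable {n k : ℕ} {S : QuandleOp (Fin n)} {ℓ : Fin k → ℕ}
  {I : Fin n → (s : Fin k) → Fin (ℓ s) → Fin n} (hI : ∀ q, IsCyclePresentation S q ℓ (I q))

noncomputable def rotatedReordering (p : Fin n × ((s : Fin k) → Fin (ℓ s))) :
    Equiv.Perm (Fin n) :=
  ((hI p.1).rotateCycles p.2).reordering

lemma val_rotatedReordering_self (q : Fin n) (c : (s : Fin k) → Fin (ℓ s)) :
    (rotatedReordering hI (q, c) q : ℕ) = n - 1 :=
  ((hI q).rotateCycles c).val_reordering_self

lemma val_rotatedReordering_apply_start (q : Fin n) (c : (s : Fin k) → Fin (ℓ s)) (s : Fin k) :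
    (rotatedReordering hI (q, c) (I q s (c s)) : ℕ) = ∑ j ∈ Iio s, ℓ j := by
  simpa [rotatedReordering, rotateCycles] using
    ((hI q).rotateCycles c).val_reordering_apply s ⟨0, (hI q).1 s⟩

lemma rotatedReordering_injective : Injective (rotatedReordering hI) := by
  rintro ⟨q, c⟩ ⟨q', c'⟩ e
  have hq := val_rotatedReordering_self hI q c
  rw [e, ← val_rotatedReordering_self hI q' c'] at hq
  obtain rfl : q = q' := (rotatedReordering hI (q', c')).injective (Fin.ext hq)
  refine Prod.ext rfl (funext fun s => (hI q).apply_injective s ?_)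
  have hs := val_rotatedReordering_apply_start hI q c s
  rw [e, ← val_rotatedReordering_apply_start hI q c' s] at hs
  exact (rotatedReordering hI (q, c')).injective (Fin.ext hs)

lemma range_rotatedReordering (hℓ : StrictMono ℓ) :
    Set.range (rotatedReordering hI) = {ν | ∃ q, IsNaturalReordering S q ν} := by
  ext ν
  constructor
  · rintro ⟨⟨q, c⟩, rfl⟩
    exact ⟨q, k, ℓ, _, ((hI q).rotateCycles c).isNaturalReorderingWith_reordering⟩
  · rintro ⟨q, k', ℓ', I', hν⟩
    have h' := (isNaturalReorderingWith_iff.1 hν).2.1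
    obtain rfl := (hI q).card_eq h'
    obtain rfl := (hI q).lengths_eq hℓ h'
    obtain ⟨c, rfl⟩ := (hI q).exists_rotateCycles_eq hℓ h'
    exact ⟨(q, c), (h'.eq_reordering hν).symm⟩

end Counting

theorem card_natural_reorderings_general
    {n k : ℕ} (S : QuandleOp (Fin n))
    (ℓ : Fin k → ℕ) (hstrict : StrictMono ℓ)
    (hprofile : ∀ q : Fin n, ∃ I, IsCyclePresentation S q ℓ I) :
    {ν : Equiv.Perm (Fin n) | ∃ q : Fin n, IsNaturalReordering S q ν}.ncard
      = n * ∏ s, ℓ s := by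
  choose I hI using hprofile
  rw [← range_rotatedReordering hI hstrict,
    Set.ncard_range_of_injective (rotatedReordering_injective hI)]
  simp [Fintype.card_pi]

/-- if a finite connected quandle on `{1,…,n}` has profile
`{1, ℓ 0, …, ℓ (k-1)}` with `1 ≤ ℓ 0 < ℓ 1 < ⋯ < ℓ (k-1)`, then the number of natural
reorderings (with respect to `r q` for some `q`) is exactly `n * ℓ 0 * ⋯ * ℓ (k-1)`. -/
theorem card_natural_reorderings
    {n k : ℕ} (S : QuandleOp (Fin n)) (hconn : S.Connected)
    (ℓ : Fin k → ℕ) (hstrict : StrictMono ℓ)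
    (hprofile : ∀ q : Fin n, ∃ I, IsCyclePresentation S q ℓ I) :
    {ν : Equiv.Perm (Fin n) | ∃ q : Fin n, IsNaturalReordering S q ν}.ncard
      = n * ∏ s, ℓ s :=
  card_natural_reorderings_general S ℓ hstrict hprofile
end
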